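/- arXiv:1509.05114 — 3 statements merged into one kernel-verified Lean document; each statement's English description precedes it below -/
import Mathlib

section
/- In ν(G), for all g, h, x, y ∈ G one has [[g,hφ],[x,yφ]] = [[g,h],[x,y]φ]. -/
open Monoid Subgroup
open scoped commutatorElement

/-- The relators of the presentation of ν(G): for all g, h, k ∈ G,
`[g,hφ]^k = [g^k,(h^k)φ]` and `[g,hφ]^(kφ) = [g^k,(h^k)φ]` (exponents denote conjugation). -/
def nuRels (G : Type*) [Group G] : Set (Monoid.Coprod G G) :=
  { r | ∃ g h k : G,
      r = ((Coprod.inl k)⁻¹ * ⁅(Coprod.inl g : Coprod G G), Coprod.inr h⁆ * Coprod.inl k) *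
          (⁅(Coprod.inl (k⁻¹ * g * k) : Coprod G G), Coprod.inr (k⁻¹ * h * k)⁆)⁻¹ ∨
      r = ((Coprod.inr k)⁻¹ * ⁅(Coprod.inl g : Coprod G G), Coprod.inr h⁆ * Coprod.inr k) *
          (⁅(Coprod.inl (k⁻¹ * g * k) : Coprod G G), Coprod.inr (k⁻¹ * h * k)⁆)⁻¹ }

/-- The group ν(G): the quotient of the free product G * Gφ by the defining relations. -/
def Nu (G : Type*) [Group G] := Coprod G G ⧸ Subgroup.normalClosure (nuRels G)

instance (G : Type*) [Group G] : Group (Nu G) := QuotientGroup.Quotient.group _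

/-- The canonical map G → ν(G) (the copy `G`). -/
def nuL (G : Type*) [Group G] : G →* Nu G := (QuotientGroup.mk' _).comp Coprod.inl

/-- The canonical map G → ν(G) (the copy `Gφ`). -/
def nuR (G : Type*) [Group G] : G →* Nu G := (QuotientGroup.mk' _).comp Coprod.inr

/-!
Write `t(a, b) = ⁅nuL a, nuR b⁆` for `[a, bφ]` and `π : ν(G) → G` for the map folding both copies
onto `G`. The defining relations make conjugation by any `u` act on the `t(a, b)` through `π u`.
Hence `⁅t(g, h), t(x, y)⁆ = ⁅nuL ⁅g, h⁆, t(x, y)⁆`, and elements of `ker π` centralize the subgroup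
`T` generated by the `t(a, b)`. It remains to show that `nuL ⁅g, h⁆` commutes with
`t(x, y)⁻¹ · nuR ⁅x, y⁆`. Their commutator `δ(w)` (with `nuL w` in place of `nuL ⁅g, h⁆`) is a
crossed homomorphism with values in `T ∩ ker π`, and expanding `t` in its first argument shows
that it is a class function. Writing `gh = ⁅g, h⁆ · hg` then gives `δ(hg) = δ(hg) · δ ⁅g, h⁆`,
because `nuL ⁅g, h⁆` acts on `T` like `t(g, h) ∈ T`, which commutes with `δ(hg)`.
-/

theorem commutatorElement_eq_of_commute_inv_mul {M : Type*} [Group M] {a b c : M}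
    (h : Commute a (b⁻¹ * c)) : ⁅a, b⁆ = ⁅a, c⁆ := by
  have hc : c = b * (b⁻¹ * c) := by group
  rw [hc, commutatorElement_mul_right_eq_mul_conj, commutatorElement_eq_one_iff_commute.mpr h]
  group

theorem apply_commutatorElement_eq_one_of_cocycle {G M : Type*} [Group G] [Group M]
    (ℓ : G →* M) (f : G → M) (hmul : ∀ a b, f (a * b) = ℓ a * f b * (ℓ a)⁻¹ * f a)
    (hconj : ∀ a w, f (MulAut.conj a w) = f w) {g h : G}
    (hcomm : Commute (ℓ ⁅g, h⁆) (f (h * g))) : f ⁅g, h⁆ = 1 := by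
  have hgh : g * h = ⁅g, h⁆ * (h * g) := by rw [commutatorElement_def]; group
  have hswap : f (g * h) = f (h * g) := by
    rw [← hconj g (h * g), MulAut.conj_apply]; group
  rw [hgh, hmul, hcomm.eq, mul_inv_cancel_right] at hswap
  exact left_eq_mul.mp hswap.symm

namespace Nu

variable {G : Type*} [Group G]

def mk : Coprod G G →* Nu G := QuotientGroup.mk' _

lemma mk_surjective : Function.Surjective (mk (G := G)) := QuotientGroup.mk'_surjective _

@[simp] lemma mk_inl (a : G) : mk (Coprod.inl a) = nuL G a := rfl

@[simp] lemma mk_inr (a : G) : mk (Coprod.inr a) = nuR G a := rfl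

lemma mk_eq_one_of_mem_nuRels {r : Coprod G G} (hr : r ∈ nuRels G) : mk r = 1 :=
  (QuotientGroup.eq_one_iff r).mpr (subset_normalClosure hr)

variable (G) in
def fold : Nu G →* G :=
  QuotientGroup.lift _ (Coprod.lift (MonoidHom.id G) (MonoidHom.id G)) <|
    normalClosure_le_normal <| by
      rintro r ⟨g, h, k, rfl | rfl⟩ <;>
      · simp only [SetLike.mem_coe, MonoidHom.mem_ker, commutatorElement_def, map_mul, map_inv,
          Coprod.lift_apply_inl, Coprod.lift_apply_inr, MonoidHom.id_apply]
        group

@[simp] lemma fold_nuL (a : G) : fold G (nuL G a) = a := rfl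

@[simp] lemma fold_nuR (a : G) : fold G (nuR G a) = a := rfl

def tensor (a b : G) : Nu G := ⁅nuL G a, nuR G b⁆

@[simp] lemma fold_tensor (a b : G) : fold G (tensor a b) = ⁅a, b⁆ := by
  simp [tensor, map_commutatorElement]

lemma nuL_conj_tensor (k a b : G) :
    nuL G k * tensor a b * (nuL G k)⁻¹ = tensor (MulAut.conj k a) (MulAut.conj k b) := by
  have h := mk_eq_one_of_mem_nuRels (G := G) ⟨a, b, k⁻¹, Or.inl rfl⟩
  simpa only [tensor, map_mul, map_inv, map_commutatorElement, mk_inl, mk_inr, mul_inv_eq_one,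
    inv_inv, MulAut.conj_apply] using h

lemma nuR_conj_tensor (k a b : G) :
    nuR G k * tensor a b * (nuR G k)⁻¹ = tensor (MulAut.conj k a) (MulAut.conj k b) := by
  have h := mk_eq_one_of_mem_nuRels (G := G) ⟨a, b, k⁻¹, Or.inr rfl⟩
  simpa only [tensor, map_mul, map_inv, map_commutatorElement, mk_inl, mk_inr, mul_inv_eq_one,
    inv_inv, MulAut.conj_apply] using h

theorem conj_tensor (u : Nu G) (a b : G) :
    u * tensor a b * u⁻¹ = tensor (MulAut.conj (fold G u) a) (MulAut.conj (fold G u) b) := by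
  obtain ⟨v, rfl⟩ := mk_surjective u
  induction v using Coprod.induction_on generalizing a b with
  | inl k => exact nuL_conj_tensor k a b
  | inr k => exact nuR_conj_tensor k a b
  | mul p q hp hq =>
    rw [map_mul, map_mul, map_mul, MulAut.mul_apply, MulAut.mul_apply, ← hp, ← hq]
    group

lemma conj_tensor_eq_of_fold_eq {u v : Nu G} (h : fold G u = fold G v) (a b : G) :
    u * tensor a b * u⁻¹ = v * tensor a b * v⁻¹ := by
  rw [conj_tensor, conj_tensor, h]

lemma commutatorElement_tensor_eq_of_fold_eq {u v : Nu G} (h : fold G u = fold G v) (a b : G) :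
    ⁅u, tensor a b⁆ = ⁅v, tensor a b⁆ := by
  rw [commutatorElement_def, commutatorElement_def, conj_tensor_eq_of_fold_eq h]

lemma tensor_mul_right (a b z : G) :
    tensor a (b * z) = tensor a b * tensor (MulAut.conj b a) (MulAut.conj b z) := by
  rw [← nuR_conj_tensor, tensor, map_mul, commutatorElement_mul_right_eq_mul_conj, tensor, tensor]
  group

lemma tensor_conj_inv (w a : G) : tensor (MulAut.conj a w) a⁻¹ = (tensor w a)⁻¹ := by
  have h := tensor_mul_right w a a⁻¹
  have e : MulAut.conj a a⁻¹ = a⁻¹ := by simp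
  rw [mul_inv_cancel, tensor, map_one, commutatorElement_one_right, e] at h
  exact eq_inv_of_mul_eq_one_right h.symm

lemma tensor_conj_left (a w z : G) :
    tensor (MulAut.conj a w) z =
      (tensor w a)⁻¹ * tensor w z * tensor (MulAut.conj z w) (MulAut.conj z a) := by
  have h := tensor_mul_right (MulAut.conj a w) a⁻¹ (a * z)
  have e₁ : MulAut.conj a⁻¹ (MulAut.conj a w) = w := by simp only [MulAut.conj_apply]; group
  have e₂ : MulAut.conj a⁻¹ (a * z) = z * a := by simp only [MulAut.conj_apply]; group
  rw [inv_mul_cancel_left, tensor_conj_inv, e₁, e₂, tensor_mul_right] at h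
  rw [h, mul_assoc]

variable (G) in
def tensorSubgroup : Subgroup (Nu G) := closure {t | ∃ a b : G, tensor a b = t}

lemma tensor_mem (a b : G) : tensor a b ∈ tensorSubgroup G := subset_closure ⟨a, b, rfl⟩

theorem commute_of_fold_eq_one {u η : Nu G} (hu : fold G u = 1) (hη : η ∈ tensorSubgroup G) :
    Commute u η := by
  suffices tensorSubgroup G ≤ centralizer {u} from
    (mem_centralizer_singleton_iff.mp (this hη)).symm
  rw [tensorSubgroup, closure_le]
  rintro _ ⟨a, b, rfl⟩
  rw [SetLike.mem_coe, mem_centralizer_singleton_iff, eq_comm,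
    ← mul_inv_eq_iff_eq_mul, conj_tensor, hu]
  simp

def defect (x y w : G) : Nu G := ⁅nuL G w, (tensor x y)⁻¹ * nuR G ⁅x, y⁆⁆

section Defect

variable (x y : G)

lemma defect_eq (w : G) :
    defect x y w = (nuL G w * tensor x y * (nuL G w)⁻¹)⁻¹ * tensor w ⁅x, y⁆ * tensor x y := by
  simp only [defect, tensor, commutatorElement_def]
  group

lemma defect_mem (w : G) : defect x y w ∈ tensorSubgroup G := by
  rw [defect_eq, conj_tensor]
  exact mul_mem (mul_mem (inv_mem (tensor_mem _ _)) (tensor_mem _ _)) (tensor_mem _ _)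

@[simp] lemma fold_defect (w : G) : fold G (defect x y w) = 1 := by
  rw [defect, map_commutatorElement, map_mul, map_inv, fold_tensor, fold_nuR, inv_mul_cancel,
    commutatorElement_one_right]

lemma commute_defect (w : G) {η : Nu G} (hη : η ∈ tensorSubgroup G) :
    Commute (defect x y w) η :=
  commute_of_fold_eq_one (fold_defect x y w) hη

lemma defect_mul (a b : G) :
    defect x y (a * b) = nuL G a * defect x y b * (nuL G a)⁻¹ * defect x y a := by
  simp only [defect, map_mul, commutatorElement_mul_left_eq_conj_mul]

lemma defect_conj (a w : G) : defect x y (MulAut.conj a w) = defect x y w := by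
  set u := (tensor w a)⁻¹ * nuL G w
  have hu : nuL G (MulAut.conj a w) * tensor x y * (nuL G (MulAut.conj a w))⁻¹ =
      u * tensor x y * u⁻¹ :=
    conj_tensor_eq_of_fold_eq (by simp [u, commutatorElement_def]; group) x y
  have hz : tensor (MulAut.conj ⁅x, y⁆ w) (MulAut.conj ⁅x, y⁆ a) =
      tensor x y * tensor w a * (tensor x y)⁻¹ := by
    rw [conj_tensor, fold_tensor]
  have hw : tensor w ⁅x, y⁆ * tensor x y =
      nuL G w * tensor x y * (nuL G w)⁻¹ * defect x y w := by
    rw [defect_eq]; group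
  have hd : (tensor w a)⁻¹ * defect x y w * tensor w a = defect x y w := by
    rw [mul_assoc, (commute_defect x y w (tensor_mem w a)).eq, inv_mul_cancel_left]
  calc defect x y (MulAut.conj a w)
      = (u * tensor x y * u⁻¹)⁻¹ *
          ((tensor w a)⁻¹ * (tensor w ⁅x, y⁆ * tensor x y) * tensor w a) := by
        rw [defect_eq, hu, tensor_conj_left, hz]; group
    _ = (u * tensor x y * u⁻¹)⁻¹ * (u * tensor x y * u⁻¹) *
          ((tensor w a)⁻¹ * defect x y w * tensor w a) := by
        rw [hw]; simp only [u]; group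
    _ = defect x y w := by rw [hd, inv_mul_cancel, one_mul]

theorem defect_commutatorElement (g h : G) : defect x y ⁅g, h⁆ = 1 := by
  refine apply_commutatorElement_eq_one_of_cocycle (nuL G) (defect x y) (defect_mul x y)
    (defect_conj x y) ?_
  have hfold : fold G (nuL G ⁅g, h⁆ * (tensor g h)⁻¹) = 1 := by
    rw [map_mul, map_inv, fold_nuL, fold_tensor, mul_inv_cancel]
  have hsplit : nuL G ⁅g, h⁆ = nuL G ⁅g, h⁆ * (tensor g h)⁻¹ * tensor g h := by group
  rw [hsplit]
  exact (commute_of_fold_eq_one hfold (defect_mem x y _)).mul_left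
    (commute_defect x y _ (tensor_mem g h)).symm

end Defect

end Nu

/-- Lemma 2.1(v): [[g,hφ],[x,yφ]] = [[g,h],[x,y]φ] in ν(G). -/
theorem nu_comm_comm (G : Type*) [Group G] (g h x y : G) :
    ⁅⁅nuL G g, nuR G h⁆, ⁅nuL G x, nuR G y⁆⁆ = ⁅⁅nuL G g, nuL G h⁆, nuR G ⁅x, y⁆⁆ := by
  have hk : Commute (nuL G ⁅g, h⁆) ((Nu.tensor x y)⁻¹ * nuR G ⁅x, y⁆) :=
    commutatorElement_eq_one_iff_commute.mp (Nu.defect_commutatorElement x y g h)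
  calc ⁅⁅nuL G g, nuR G h⁆, ⁅nuL G x, nuR G y⁆⁆ = ⁅nuL G ⁅g, h⁆, Nu.tensor x y⁆ :=
        Nu.commutatorElement_tensor_eq_of_fold_eq (by simp [map_commutatorElement]) x y
    _ = ⁅nuL G ⁅g, h⁆, nuR G ⁅x, y⁆⁆ := commutatorElement_eq_of_commute_inv_mul hk
    _ = ⁅⁅nuL G g, nuL G h⁆, nuR G ⁅x, y⁆⁆ := by rw [map_commutatorElement]
end

section
/- For every positive integer n, the subgroup [Z_n(G), Gφ][G, Z_n(G)φ] of ν(G) is contained in the n-th center Z_n(ν(G)). -/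
open Monoid Subgroup
open scoped commutatorElement

/-!
Induction on `n`, showing `⁅z, gφ⁆ ∈ Z_n(ν(G))` for `z ∈ Z_n(G)`; the automorphism of `ν(G)`
exchanging the two copies of `G` gives `⁅g, zφ⁆ ∈ Z_n(ν(G))` as well. For `z ∈ Z_{n+1}(G)`, work
modulo `Z_n(ν(G))`: by induction `⁅u, vφ⁆` only depends on `u` and `v` modulo `Z_n(G)`, so the
defining relations say that conjugation by `k` and by `kφ` both send `⁅z, gφ⁆` to
`⁅z, (k g k⁻¹)φ⁆`, and that `z` centralises these commutators. Then `g ↦ ⁅z, gφ⁆` is an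
antihomomorphism with commuting values, hence invariant under conjugation, so `⁅z, gφ⁆` is
central modulo `Z_n(ν(G))` since `ν(G)` is generated by `G` and `Gφ`.
-/

theorem commutatorElement_mem_iff_commute {Q : Type*} [Group Q] (N : Subgroup Q) [N.Normal]
    (x y : Q) : ⁅x, y⁆ ∈ N ↔ Commute (QuotientGroup.mk' N x) (QuotientGroup.mk' N y) := by
  rw [← QuotientGroup.eq_one_iff, ← QuotientGroup.mk'_apply, map_commutatorElement,
    commutatorElement_eq_one_iff_commute]

theorem Subgroup.mem_upperCentralSeries_succ_of_closure_eq_top {Q : Type*} [Group Q]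
    {s : Set Q} (hs : closure s = ⊤) {n : ℕ} {x : Q}
    (hx : ∀ y ∈ s, ⁅x, y⁆ ∈ upperCentralSeries Q n) : x ∈ upperCentralSeries Q (n + 1) := by
  rw [mem_upperCentralSeries_succ_iff]
  intro y
  induction (hs ▸ mem_top y : y ∈ closure s) using closure_induction with
  | mem y hy => exact hx y hy
  | one => simp
  | mul y₁ y₂ _ _ h₁ h₂ =>
    rw [show ⁅x, y₁ * y₂⁆ = ⁅x, y₁⁆ * (y₁ * ⁅x, y₂⁆ * y₁⁻¹) by group]
    exact mul_mem h₁ (Normal.conj_mem inferInstance _ h₂ y₁)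
  | inv y _ hy =>
    rw [show ⁅x, y⁻¹⁆ = y⁻¹ * ⁅x, y⁆⁻¹ * y⁻¹⁻¹ by group]
    exact Normal.conj_mem inferInstance _ (inv_mem hy) y⁻¹

theorem commute_commutatorElement_of_conj {Q G : Type*} [Group Q] [Group G] {x : Q} (r : G →* Q)
    (hx : ∀ g, Commute x ⁅x, r g⁆)
    (hr : ∀ h g, r h * ⁅x, r g⁆ * (r h)⁻¹ = ⁅x, r (h * g * h⁻¹)⁆) (g h : G) :
    Commute ⁅x, r g⁆ (r h) := by
  -- `⁅x, r ·⁆` is an antihomomorphism with pairwise commuting values, so conjugation by `r h`,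
  -- which sends `⁅x, r g⁆` to `⁅x, r (h * g * h⁻¹)⁆ = ⁅x, r h⁻¹⁆ * ⁅x, r g⁆ * ⁅x, r h⁆`, fixes it.
  have antimul : ∀ a b, ⁅x, r (b * a)⁆ = ⁅x, r a⁆ * ⁅x, r b⁆ := by
    intro a b
    calc ⁅x, r (b * a)⁆ = ⁅x, r a⁆ * (r a * ⁅x, r (a⁻¹ * b * a)⁆ * (r a)⁻¹) := by
          simp only [map_mul, map_inv, commutatorElement_def]; group
      _ = ⁅x, r a⁆ * ⁅x, r b⁆ := by rw [hr]; group
  have comm : ∀ a c, Commute ⁅x, r a⁆ ⁅x, r c⁆ := by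
    intro a c
    refine mul_inv_eq_iff_eq_mul.mp ?_
    calc ⁅x, r a⁆ * ⁅x, r c⁆ * ⁅x, r a⁆⁻¹
        = x * (r a * (x⁻¹ * (r a⁻¹ * ⁅x, r c⁆ * (r a⁻¹)⁻¹) * x) * (r a)⁻¹) * x⁻¹ := by
          simp only [map_inv, commutatorElement_def]; group
      _ = ⁅x, r c⁆ := by
          rw [hr, (hx _).inv_mul_cancel, hr, (hx _).mul_inv_cancel]; group
  refine (mul_inv_eq_iff_eq_mul.mp ?_).symm
  calc r h * ⁅x, r g⁆ * (r h)⁻¹ = ⁅x, r (h * g * h⁻¹)⁆ := hr h g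
    _ = ⁅x, r h⁻¹⁆ * ⁅x, r g⁆ * ⁅x, r h⁆ := by rw [antimul, antimul, mul_assoc]
    _ = ⁅x, r g⁆ * ⁅x, r (h * h⁻¹)⁆ := by rw [(comm _ _).eq, antimul, mul_assoc]
    _ = ⁅x, r g⁆ := by simp

namespace Nu

variable {G : Type*} [Group G]

theorem mk'_inl (g : G) : QuotientGroup.mk' _ (Coprod.inl g) = nuL G g := rfl

theorem mk'_inr (g : G) : QuotientGroup.mk' _ (Coprod.inr g) = nuR G g := rfl

theorem mk'_eq_one_of_mem_nuRels {r : Coprod G G} (hr : r ∈ nuRels G) :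
    QuotientGroup.mk' (normalClosure (nuRels G)) r = 1 :=
  (QuotientGroup.eq_one_iff r).mpr (subset_normalClosure hr)

theorem nuL_mul_commutatorElement_mul_inv (g h k : G) :
    nuL G k * ⁅nuL G g, nuR G h⁆ * (nuL G k)⁻¹ = ⁅nuL G (k * g * k⁻¹), nuR G (k * h * k⁻¹)⁆ := by
  have := mk'_eq_one_of_mem_nuRels ⟨g, h, k⁻¹, Or.inl rfl⟩
  simp only [map_mul, map_inv, map_commutatorElement, mk'_inl, mk'_inr, inv_inv,
    mul_inv_eq_one] at this ⊢
  exact this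

theorem nuR_mul_commutatorElement_mul_inv (g h k : G) :
    nuR G k * ⁅nuL G g, nuR G h⁆ * (nuR G k)⁻¹ = ⁅nuL G (k * g * k⁻¹), nuR G (k * h * k⁻¹)⁆ := by
  have := mk'_eq_one_of_mem_nuRels ⟨g, h, k⁻¹, Or.inr rfl⟩
  simp only [map_mul, map_inv, map_commutatorElement, mk'_inl, mk'_inr, inv_inv,
    mul_inv_eq_one] at this ⊢
  exact this

theorem commutatorElement_commutatorElement_nuL_eq_nuR (g h k : G) :
    ⁅⁅nuL G g, nuR G h⁆, nuL G k⁆ = ⁅⁅nuL G g, nuR G h⁆, nuR G k⁆ := by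
  set c := ⁅nuL G g, nuR G h⁆
  calc ⁅c, nuL G k⁆ = c * (nuL G k * c * (nuL G k)⁻¹)⁻¹ := by group
    _ = c * (nuR G k * c * (nuR G k)⁻¹)⁻¹ := by
      rw [nuL_mul_commutatorElement_mul_inv, nuR_mul_commutatorElement_mul_inv]
    _ = ⁅c, nuR G k⁆ := by group

theorem closure_range_nuL_union_range_nuR :
    closure (Set.range (nuL G) ∪ Set.range (nuR G)) = ⊤ := by
  refine (eq_top_iff' _).mpr fun x ↦ ?_
  obtain ⟨y, rfl⟩ := QuotientGroup.mk'_surjective _ x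
  induction y using Coprod.induction_on with
  | inl g => exact subset_closure (Or.inl ⟨g, rfl⟩)
  | inr g => exact subset_closure (Or.inr ⟨g, rfl⟩)
  | mul a b ha hb => rw [map_mul]; exact mul_mem ha hb

def swapHom : Nu G →* Nu G :=
  QuotientGroup.lift _ (Coprod.lift (nuR G) (nuL G)) <| normalClosure_le_normal <| by
    rintro _ ⟨g, h, k, rfl | rfl⟩
    all_goals
      have hL := nuL_mul_commutatorElement_mul_inv h g k⁻¹
      have hR := nuR_mul_commutatorElement_mul_inv h g k⁻¹
      simp only [SetLike.mem_coe, MonoidHom.mem_ker, map_mul, map_inv, map_commutatorElement,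
        Coprod.lift_apply_inl, Coprod.lift_apply_inr, inv_inv] at hL hR ⊢
      rw [← commutatorElement_inv (nuL G h), ← commutatorElement_inv (_ * nuL G h * _)]
    · rw [← hR]; group
    · rw [← hL]; group

def swap : Nu G ≃* Nu G :=
  swapHom.toMulEquiv swapHom
    (QuotientGroup.monoidHom_ext _ <| Coprod.hom_ext (MonoidHom.ext fun _ ↦ rfl)
      (MonoidHom.ext fun _ ↦ rfl))
    (QuotientGroup.monoidHom_ext _ <| Coprod.hom_ext (MonoidHom.ext fun _ ↦ rfl)
      (MonoidHom.ext fun _ ↦ rfl))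

theorem commutatorElement_nuL_nuR_mem_upperCentralSeries_comm {n : ℕ} {g z : G} :
    ⁅nuL G g, nuR G z⁆ ∈ Subgroup.upperCentralSeries (Nu G) n ↔
      ⁅nuL G z, nuR G g⁆ ∈ Subgroup.upperCentralSeries (Nu G) n := by
  have hswap : swap ⁅nuL G z, nuR G g⁆ = ⁅nuL G g, nuR G z⁆⁻¹ := by
    rw [map_commutatorElement, commutatorElement_inv]
    rfl
  rw [← inv_mem_iff, ← hswap]
  exact SetLike.ext_iff.mp (Subgroup.comap_upperCentralSeries swap n) _

theorem mk'_commutatorElement_nuL_mul {N : Subgroup (Nu G)} [N.Normal] {c : G}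
    (hc : ∀ w, ⁅nuL G c, nuR G w⁆ ∈ N) (v w : G) :
    QuotientGroup.mk' N ⁅nuL G (v * c), nuR G w⁆ = QuotientGroup.mk' N ⁅nuL G v, nuR G w⁆ := by
  rw [show ⁅nuL G (v * c), nuR G w⁆ =
      nuL G v * ⁅nuL G c, nuR G w⁆ * (nuL G v)⁻¹ * ⁅nuL G v, nuR G w⁆ by
    simp only [map_mul, commutatorElement_def]; group]
  have hconj : QuotientGroup.mk' N (nuL G v * ⁅nuL G c, nuR G w⁆ * (nuL G v)⁻¹) = 1 :=
    (QuotientGroup.eq_one_iff _).mpr (Normal.conj_mem inferInstance _ (hc w) _)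
  rw [map_mul, hconj, one_mul]

theorem mk'_commutatorElement_nuR_mul {N : Subgroup (Nu G)} [N.Normal] {e : G}
    (he : ∀ v, ⁅nuL G v, nuR G e⁆ ∈ N) (v w : G) :
    QuotientGroup.mk' N ⁅nuL G v, nuR G (w * e)⁆ = QuotientGroup.mk' N ⁅nuL G v, nuR G w⁆ := by
  rw [show ⁅nuL G v, nuR G (w * e)⁆ =
      ⁅nuL G v, nuR G w⁆ * (nuR G w * ⁅nuL G v, nuR G e⁆ * (nuR G w)⁻¹) by
    simp only [map_mul, commutatorElement_def]; group]
  have hconj : QuotientGroup.mk' N (nuR G w * ⁅nuL G v, nuR G e⁆ * (nuR G w)⁻¹) = 1 :=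
    (QuotientGroup.eq_one_iff _).mpr (Normal.conj_mem inferInstance _ (he v) _)
  rw [map_mul, hconj, mul_one]

theorem commutatorElement_nuL_nuR_mem_upperCentralSeries_succ {n : ℕ}
    (ih : ∀ c ∈ Subgroup.upperCentralSeries G n, ∀ w,
      ⁅nuL G c, nuR G w⁆ ∈ Subgroup.upperCentralSeries (Nu G) n)
    {z : G} (hz : z ∈ Subgroup.upperCentralSeries G (n + 1)) (g : G) :
    ⁅nuL G z, nuR G g⁆ ∈ Subgroup.upperCentralSeries (Nu G) (n + 1) := by
  set π := QuotientGroup.mk' (Subgroup.upperCentralSeries (Nu G) n)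
  have hconjR : ∀ h w, π (nuR G h) * ⁅π (nuL G z), π (nuR G w)⁆ * (π (nuR G h))⁻¹ =
      ⁅π (nuL G z), π (nuR G (h * w * h⁻¹))⁆ := by
    intro h w
    rw [← map_commutatorElement, ← map_inv, ← map_mul, ← map_mul, ← map_commutatorElement,
      nuR_mul_commutatorElement_mul_inv, show h * z * h⁻¹ = z * ⁅z⁻¹, h⁆ by group]
    exact mk'_commutatorElement_nuL_mul (ih _ (Subgroup.mem_upperCentralSeries_succ_iff.mp
      (inv_mem hz) h)) _ _
  have hconjL : ∀ w, Commute (π (nuL G z)) ⁅π (nuL G z), π (nuR G w)⁆ := by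
    intro w
    refine mul_inv_eq_iff_eq_mul.mp ?_
    rw [← map_commutatorElement, ← map_inv, ← map_mul, ← map_mul,
      nuL_mul_commutatorElement_mul_inv, mul_inv_cancel_right,
      show z * w * z⁻¹ = w * ⁅z, w⁻¹⁆⁻¹ by group]
    exact mk'_commutatorElement_nuR_mul (fun v ↦
      commutatorElement_nuL_nuR_mem_upperCentralSeries_comm.mpr
        (ih _ (inv_mem (Subgroup.mem_upperCentralSeries_succ_iff.mp hz w⁻¹)) v)) _ _
  have hcomm : ∀ h, ⁅⁅nuL G z, nuR G g⁆, nuR G h⁆ ∈ Subgroup.upperCentralSeries (Nu G) n := by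
    intro h
    rw [commutatorElement_mem_iff_commute, map_commutatorElement]
    exact commute_commutatorElement_of_conj (π.comp (nuR G)) hconjL hconjR g h
  refine Subgroup.mem_upperCentralSeries_succ_of_closure_eq_top
    closure_range_nuL_union_range_nuR ?_
  rintro _ (⟨h, rfl⟩ | ⟨h, rfl⟩)
  · rw [commutatorElement_commutatorElement_nuL_eq_nuR]
    exact hcomm h
  · exact hcomm h

theorem commutatorElement_nuL_nuR_mem_upperCentralSeries :
    ∀ n, ∀ z ∈ Subgroup.upperCentralSeries G n, ∀ g,
      ⁅nuL G z, nuR G g⁆ ∈ Subgroup.upperCentralSeries (Nu G) n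
  | 0, z, hz, g => by
    rw [Subgroup.upperCentralSeries_zero, mem_bot] at hz
    simp [hz]
  | n + 1, _, hz, g =>
    commutatorElement_nuL_nuR_mem_upperCentralSeries_succ
      (commutatorElement_nuL_nuR_mem_upperCentralSeries n) hz g

end Nu

theorem nu_upper_central_general (G : Type*) [Group G] (n : ℕ) :
    ⁅(Subgroup.upperCentralSeries G n).map (nuL G), (nuR G).range⁆ ⊔
        ⁅(nuL G).range, (Subgroup.upperCentralSeries G n).map (nuR G)⁆ ≤
      Subgroup.upperCentralSeries (Nu G) n := by
  refine sup_le ?_ ?_ <;> rw [commutator_le]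
  · rintro _ ⟨z, hz, rfl⟩ _ ⟨g, rfl⟩
    exact Nu.commutatorElement_nuL_nuR_mem_upperCentralSeries n z hz g
  · rintro _ ⟨g, rfl⟩ _ ⟨z, hz, rfl⟩
    exact Nu.commutatorElement_nuL_nuR_mem_upperCentralSeries_comm.mpr
      (Nu.commutatorElement_nuL_nuR_mem_upperCentralSeries n z hz g)

/-- Lemma 2.4: [Z_n(G), Gφ][G, Z_n(G)φ] ≤ Z_n(ν(G)) for every positive n. -/
theorem nu_upper_central (G : Type*) [Group G] (n : ℕ) (hn : 0 < n) :
    ⁅(Subgroup.upperCentralSeries G n).map (nuL G), (nuR G).range⁆ ⊔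
        ⁅(nuL G).range, (Subgroup.upperCentralSeries G n).map (nuR G)⁆ ≤
      Subgroup.upperCentralSeries (Nu G) n :=
  nu_upper_central_general G n
end

section
/- For every i ≥ 2, the i-th term of the lower central series of ν(G) equals γ_i(G)·γ_i(Gφ)·[γ_{i-1}(G), Gφ]·[G, γ_{i-1}(Gφ)]. -/
open Monoid Subgroup
open scoped commutatorElement

/-!
For a normal subgroup `A` of `G` let `T(A) = [A,G]·[A,G]φ·[A,Gφ]·[G,Aφ]`. The defining relations
say that conjugation by `k` and by `kφ` act in the same way on the commutators `[x, yφ]`; this makes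
`[A,Gφ]` and `[G,Aφ]`, and then `T(A)`, normal in `ν(G)`. Moving the conjugation by `hφ` inside
`[x, yφ]` also gives `[[g,hφ],kφ] = [[g,h],kφ] = [[g,hφ],k]`, so `[T(A), ν(G)] ≤ T([A,G])`.
Starting from `ν(G) = G·Gφ`, induction on `i` gives `γ_i(ν(G)) ≤ T(γ_{i-1}(G))`; the reverse
inclusion is immediate.
-/

namespace Subgroup

variable {M : Type*} [Group M]

theorem commutator_le_iff_le_comap_centralizer {H K N : Subgroup M} [N.Normal] :
    ⁅H, K⁆ ≤ N ↔
      H ≤ (centralizer (K.map (QuotientGroup.mk' N) : Set (M ⧸ N))).comap (QuotientGroup.mk' N) := by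
  rw [← map_le_iff_le_comap, ← commutator_eq_bot_iff_le_centralizer, ← map_commutator,
    map_eq_bot_iff, QuotientGroup.ker_mk']

theorem commutator_sup_left_le {H₁ H₂ K N : Subgroup M} [N.Normal]
    (h₁ : ⁅H₁, K⁆ ≤ N) (h₂ : ⁅H₂, K⁆ ≤ N) : ⁅H₁ ⊔ H₂, K⁆ ≤ N := by
  rw [commutator_le_iff_le_comap_centralizer] at *
  exact sup_le h₁ h₂

theorem commutator_sup_right_le {H K₁ K₂ N : Subgroup M} [N.Normal]
    (h₁ : ⁅H, K₁⁆ ≤ N) (h₂ : ⁅H, K₂⁆ ≤ N) : ⁅H, K₁ ⊔ K₂⁆ ≤ N := by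
  rw [commutator_comm] at *
  exact commutator_sup_left_le h₁ h₂

theorem commutator_closure_le {S : Set M} {K N : Subgroup M} [N.Normal]
    (h : ∀ s ∈ S, ∀ k ∈ K, ⁅s, k⁆ ∈ N) : ⁅closure S, K⁆ ≤ N := by
  rw [commutator_le_iff_le_comap_centralizer, closure_le]
  rintro s hs _ ⟨k, hk, rfl⟩
  rw [← commutatorElement_eq_one_iff_mul_comm, ← map_commutatorElement, QuotientGroup.mk'_apply,
    QuotientGroup.eq_one_iff, ← commutatorElement_inv]
  exact inv_mem (h s hs k hk)

theorem map_conj_le_sup_of_commutator_le {H K N : Subgroup M} {x : M} (hx : x ∈ K)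
    (h : ⁅K, H⁆ ≤ N) : H.map (MulAut.conj x) ≤ H ⊔ N := by
  rintro _ ⟨y, hy, rfl⟩
  rw [MonoidHom.coe_coe, conj_eq_commutatorElement_mul]
  exact mul_mem (mem_sup_right (h (commutator_mem_commutator hx hy))) (mem_sup_left hy)

theorem map_conj_map_le {M' : Type*} [Group M'] (f : M →* M') (B : Subgroup M) [B.Normal]
    (k : M) : (B.map f).map (MulAut.conj (f k)) ≤ B.map f := by
  rintro _ ⟨_, ⟨b, hb, rfl⟩, rfl⟩
  exact ⟨k * b * k⁻¹, Normal.conj_mem ‹_› b hb k, by simp⟩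

theorem normal_of_map_conj_le {H K N : Subgroup M} (hHK : H ⊔ K = ⊤)
    (hH : ∀ h ∈ H, N.map (MulAut.conj h) ≤ N) (hK : ∀ k ∈ K, N.map (MulAut.conj k) ≤ N) :
    N.Normal := by
  rw [← normalizer_eq_top_iff, eq_top_iff, ← hHK, sup_le_iff, le_normalizer_iff, le_normalizer_iff]
  exact ⟨fun h hh n hn => hH h hh ⟨n, hn, rfl⟩, fun k hk n hn => hK k hk ⟨n, hn, rfl⟩⟩

end Subgroup

namespace Nu

variable {G : Type*} [Group G]

theorem nuL_conj_commutator (k g h : G) :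
    nuL G k * ⁅nuL G g, nuR G h⁆ * (nuL G k)⁻¹ = ⁅nuL G (k * g * k⁻¹), nuR G (k * h * k⁻¹)⁆ := by
  have hr := mk'_eq_one_of_mem_nuRels ⟨g, h, k⁻¹, Or.inl rfl⟩
  rw [map_mul, map_inv (QuotientGroup.mk' (normalClosure (nuRels G))), mul_inv_eq_one, map_mul,
    map_mul, map_inv (QuotientGroup.mk' (normalClosure (nuRels G))), map_commutatorElement,
    map_commutatorElement] at hr
  simp only [map_inv, inv_inv] at hr
  exact hr

theorem nuR_conj_commutator (k g h : G) :
    nuR G k * ⁅nuL G g, nuR G h⁆ * (nuR G k)⁻¹ = ⁅nuL G (k * g * k⁻¹), nuR G (k * h * k⁻¹)⁆ := by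
  have hr := mk'_eq_one_of_mem_nuRels ⟨g, h, k⁻¹, Or.inr rfl⟩
  rw [map_mul, map_inv (QuotientGroup.mk' (normalClosure (nuRels G))), mul_inv_eq_one, map_mul,
    map_mul, map_inv (QuotientGroup.mk' (normalClosure (nuRels G))), map_commutatorElement,
    map_commutatorElement] at hr
  simp only [map_inv, inv_inv] at hr
  exact hr

theorem map_nuL_top_sup_map_nuR_top :
    (⊤ : Subgroup G).map (nuL G) ⊔ (⊤ : Subgroup G).map (nuR G) = ⊤ := by
  rw [← MonoidHom.range_eq_map, ← MonoidHom.range_eq_map]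
  show ((QuotientGroup.mk' (normalClosure (nuRels G))).comp Coprod.inl).range ⊔
    ((QuotientGroup.mk' (normalClosure (nuRels G))).comp Coprod.inr).range = ⊤
  rw [MonoidHom.range_comp, MonoidHom.range_comp, ← Subgroup.map_sup,
    Coprod.range_inl_sup_range_inr, ← MonoidHom.range_eq_map, MonoidHom.range_eq_top]
  exact QuotientGroup.mk'_surjective _

theorem map_conj_commutator_map_le {x : Nu G} {k : G}
    (hx : ∀ g h, x * ⁅nuL G g, nuR G h⁆ * x⁻¹ = ⁅nuL G (k * g * k⁻¹), nuR G (k * h * k⁻¹)⁆)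
    (X Y : Subgroup G) [X.Normal] [Y.Normal] :
    ⁅X.map (nuL G), Y.map (nuR G)⁆.map (MulAut.conj x) ≤ ⁅X.map (nuL G), Y.map (nuR G)⁆ := by
  rw [Subgroup.commutator_def, MonoidHom.map_closure, closure_le]
  rintro _ ⟨_, ⟨_, ⟨a, ha, rfl⟩, _, ⟨b, hb, rfl⟩, rfl⟩, rfl⟩
  rw [MonoidHom.coe_coe, MulAut.conj_apply, hx]
  exact commutator_mem_commutator (mem_map_of_mem _ (Normal.conj_mem ‹_› a ha k))
    (mem_map_of_mem _ (Normal.conj_mem ‹_› b hb k))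

instance commutator_map_nuL_map_nuR_normal (X Y : Subgroup G) [X.Normal] [Y.Normal] :
    ⁅X.map (nuL G), Y.map (nuR G)⁆.Normal :=
  normal_of_map_conj_le map_nuL_top_sup_map_nuR_top
    (by rintro _ ⟨k, -, rfl⟩; exact map_conj_commutator_map_le (nuL_conj_commutator k) X Y)
    (by rintro _ ⟨k, -, rfl⟩; exact map_conj_commutator_map_le (nuR_conj_commutator k) X Y)

theorem commutator_nuR_conj_nuL (h x k : G) :
    ⁅nuR G h * nuL G x * (nuR G h)⁻¹, nuR G k⁆ = ⁅nuL G (h * x * h⁻¹), nuR G k⁆ :=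
  calc ⁅nuR G h * nuL G x * (nuR G h)⁻¹, nuR G k⁆
      = nuR G h * ⁅nuL G x, nuR G (h⁻¹ * k * h)⁆ * (nuR G h)⁻¹ := by
        rw [conjugate_commutatorElement]; simp only [map_mul, map_inv]; group
    _ = ⁅nuL G (h * x * h⁻¹), nuR G k⁆ := by rw [nuR_conj_commutator]; group

theorem commutator_commutator_nuR (g h k : G) :
    ⁅⁅nuL G g, nuR G h⁆, nuR G k⁆ = ⁅nuL G ⁅g, h⁆, nuR G k⁆ := by
  have hgh : ⁅nuL G g, nuR G h⁆ = nuL G g * (nuR G h * nuL G g⁻¹ * (nuR G h)⁻¹) := by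
    simp only [commutatorElement_def, map_inv, mul_assoc]
  rw [hgh, commutatorElement_mul_left_eq_conj_mul, commutator_nuR_conj_nuL,
    ← commutatorElement_mul_left_eq_conj_mul, ← map_mul]
  simp only [commutatorElement_def, mul_assoc]

theorem commutator_commutator_nuL (g h k : G) :
    ⁅⁅nuL G g, nuR G h⁆, nuL G k⁆ = ⁅nuL G ⁅g, h⁆, nuR G k⁆ := by
  have hconj (u y : Nu G) : ⁅u, y⁆ = u * (y * u * y⁻¹)⁻¹ := by
    simp only [commutatorElement_def]; group
  rw [hconj, nuL_conj_commutator, ← nuR_conj_commutator, ← hconj, commutator_commutator_nuR]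

theorem commutator_commutator_map_le (X Y : Subgroup G) [X.Normal] [Y.Normal] :
    ⁅⁅X.map (nuL G), Y.map (nuR G)⁆, ⊤⁆ ≤ ⁅⁅X, Y⁆.map (nuL G), (⊤ : Subgroup G).map (nuR G)⁆ := by
  have hmem (a : G) (ha : a ∈ X) (b : G) (hb : b ∈ Y) (k : G) :
      ⁅nuL G ⁅a, b⁆, nuR G k⁆ ∈ ⁅⁅X, Y⁆.map (nuL G), (⊤ : Subgroup G).map (nuR G)⁆ :=
    commutator_mem_commutator (mem_map_of_mem _ (commutator_mem_commutator ha hb))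
      (mem_map_of_mem _ (mem_top k))
  rw [← map_nuL_top_sup_map_nuR_top, Subgroup.commutator_def (X.map _)]
  refine commutator_sup_right_le (commutator_closure_le ?_) (commutator_closure_le ?_) <;>
    rintro _ ⟨_, ⟨a, ha, rfl⟩, _, ⟨b, hb, rfl⟩, rfl⟩ _ ⟨k, -, rfl⟩
  · rw [commutator_commutator_nuL]; exact hmem a ha b hb k
  · rw [commutator_commutator_nuR]; exact hmem a ha b hb k

/-- The paper's `γ_i(G)γ_i(Gφ)[γ_{i-1}(G),Gφ][G,γ_{i-1}(Gφ)]` is `commutatorTerm (γ_{i-1}(G))`. -/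
def commutatorTerm (A : Subgroup G) : Subgroup (Nu G) :=
  (⁅A, ⊤⁆ : Subgroup G).map (nuL G) ⊔ (⁅A, ⊤⁆ : Subgroup G).map (nuR G) ⊔
    ⁅A.map (nuL G), (⊤ : Subgroup G).map (nuR G)⁆ ⊔ ⁅(⊤ : Subgroup G).map (nuL G), A.map (nuR G)⁆

instance commutatorTerm_normal (A : Subgroup G) [A.Normal] : (commutatorTerm A).Normal := by
  have hB : ⁅A, ⊤⁆ ≤ A := commutator_le_left A ⊤
  refine normal_of_map_conj_le map_nuL_top_sup_map_nuR_top ?_ ?_ <;>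
    rintro _ ⟨k, -, rfl⟩ <;>
    simp only [commutatorTerm, Subgroup.map_sup, Normal.map_conj_eq]
  · have h₁ := map_conj_map_le (nuL G) ⁅A, ⊤⁆ k
    have h₂ := map_conj_le_sup_of_commutator_le (mem_map_of_mem (nuL G) (mem_top k))
      (commutator_mono le_rfl (map_mono hB) :
        ⁅(⊤ : Subgroup G).map (nuL G), (⁅A, ⊤⁆ : Subgroup G).map (nuR G)⁆ ≤ _)
    order
  · have h₁ := map_conj_le_sup_of_commutator_le (mem_map_of_mem (nuR G) (mem_top k))
      ((commutator_comm _ _).trans_le (commutator_mono (map_mono hB) le_rfl) :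
        ⁅(⊤ : Subgroup G).map (nuR G), (⁅A, ⊤⁆ : Subgroup G).map (nuL G)⁆ ≤ _)
    have h₂ := map_conj_map_le (nuR G) ⁅A, ⊤⁆ k
    order

theorem commutator_le_commutatorTerm (A : Subgroup G) [A.Normal] :
    ⁅A.map (nuL G) ⊔ A.map (nuR G), ⊤⁆ ≤ commutatorTerm A := by
  rw [← map_nuL_top_sup_map_nuR_top]
  refine commutator_sup_left_le (commutator_sup_right_le ?_ ?_) (commutator_sup_right_le ?_ ?_)
  all_goals
    simp only [commutatorTerm, ← map_commutator]
    try rw [commutator_comm]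
    order

theorem commutator_commutatorTerm_le (A : Subgroup G) [A.Normal] :
    ⁅commutatorTerm A, ⊤⁆ ≤ commutatorTerm ⁅A, (⊤ : Subgroup G)⁆ := by
  have hC : ⁅(⁅A, ⊤⁆ : Subgroup G).map (nuL G), (⊤ : Subgroup G).map (nuR G)⁆ ≤
      commutatorTerm ⁅A, (⊤ : Subgroup G)⁆ := by
    unfold commutatorTerm; order
  refine commutator_sup_left_le (commutator_sup_left_le (commutator_le_commutatorTerm _)
    ((commutator_commutator_map_le A ⊤).trans hC)) ((commutator_commutator_map_le ⊤ A).trans ?_)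
  rwa [commutator_comm ⊤ A]

theorem commutatorTerm_le_commutator {A : Subgroup G} {M : Subgroup (Nu G)}
    (hL : A.map (nuL G) ≤ M) (hR : A.map (nuR G) ≤ M) : commutatorTerm A ≤ ⁅M, ⊤⁆ := by
  simp only [commutatorTerm, map_commutator, sup_le_iff]
  refine ⟨⟨⟨commutator_mono hL le_top, commutator_mono hR le_top⟩, commutator_mono hL le_top⟩, ?_⟩
  rw [commutator_comm]
  exact commutator_mono hR le_top

end Nu

/-- Here `i = j + 2`; `γ_i` is `Subgroup.lowerCentralSeries ⊤ (i - 1)`. -/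
theorem nu_lower_central (G : Type*) [Group G] (j : ℕ) :
    Subgroup.lowerCentralSeries (⊤ : Subgroup (Nu G)) (j + 1) =
      (Subgroup.lowerCentralSeries (⊤ : Subgroup G) (j + 1)).map (nuL G) ⊔ (Subgroup.lowerCentralSeries (⊤ : Subgroup G) (j + 1)).map (nuR G) ⊔
        ⁅(Subgroup.lowerCentralSeries (⊤ : Subgroup G) j).map (nuL G), (nuR G).range⁆ ⊔
        ⁅(nuL G).range, (Subgroup.lowerCentralSeries (⊤ : Subgroup G) j).map (nuR G)⁆ := by
  rw [MonoidHom.range_eq_map (nuR G), MonoidHom.range_eq_map (nuL G)]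
  change _ = Nu.commutatorTerm (Subgroup.lowerCentralSeries ⊤ j)
  refine le_antisymm ?_ (Nu.commutatorTerm_le_commutator
    ((Subgroup.map_lowerCentralSeries ⊤ (nuL G) j).trans_le (lowerCentralSeries_mono j le_top))
    ((Subgroup.map_lowerCentralSeries ⊤ (nuR G) j).trans_le (lowerCentralSeries_mono j le_top)))
  induction j with
  | zero =>
    exact (commutator_mono Nu.map_nuL_top_sup_map_nuR_top.ge le_rfl).trans
      (Nu.commutator_le_commutatorTerm ⊤)
  | succ j ih => exact (commutator_mono ih le_rfl).trans (Nu.commutator_commutatorTerm_le _)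
end
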